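/- arXiv:1705.06241 — 3 statements merged into one kernel-verified Lean document; each statement's English description precedes it below -/
import Mathlib

section
/- Let A be a commutative ring, let a_1, …, a_n ∈ A, let p be a prime number, and set C = A[x_1, …, x_n]/(a_i − p·x_i : 1 ≤ i ≤ n). Let B be a commutative A-algebra in which p is a nonzerodivisor and such that the image of each a_i in B lies in p·B. Then there exists a unique A-algebra homomorphism C → B. -/
/-! An `R`-algebra map `R[X] ⧸ (a i - t * X i) → B` is a family `b i` with `t * b i = a i` in `B`.
Such a family exists when each `a i` lies in `t B`, and it is unique when `t` is a nonzerodivisor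
of `B`. -/

namespace MvPolynomial

open Ideal.Quotient

variable {σ R B : Type*} [CommRing R] [CommRing B] [Algebra R B]

/-- `R[X] ⧸ dilatationIdeal a t` is the affine dilatation ring `R[a / t]`. -/
noncomputable abbrev dilatationIdeal (a : σ → R) (t : R) : Ideal (MvPolynomial σ R) :=
  Ideal.span (Set.range fun i => C (a i) - C t * X i)

theorem dilatationIdeal_le_ker_aeval {a : σ → R} {t : R} {b : σ → B}
    (hb : ∀ i, algebraMap R B (a i) = algebraMap R B t * b i) :
    dilatationIdeal a t ≤ RingHom.ker (aeval b) := by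
  refine Ideal.span_le.mpr ?_
  rintro _ ⟨i, rfl⟩
  simp [hb i]

theorem nonempty_algHom_dilatation {a : σ → R} {t : R}
    (h : ∀ i, algebraMap R B (a i) ∈ Ideal.span {algebraMap R B t}) :
    Nonempty (MvPolynomial σ R ⧸ dilatationIdeal a t →ₐ[R] B) := by
  choose b hb using fun i => Ideal.mem_span_singleton'.mp (h i)
  exact ⟨liftₐ _ (aeval b) fun q hq =>
    dilatationIdeal_le_ker_aeval (fun i => by rw [← hb i, mul_comm]) hq⟩

theorem algebraMap_mul_algHom_mk_X {a : σ → R} {t : R}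
    (f : MvPolynomial σ R ⧸ dilatationIdeal a t →ₐ[R] B) (i : σ) :
    algebraMap R B t * f (mk _ (X i)) = algebraMap R B (a i) := by
  have hrel : mk (dilatationIdeal a t) (C (a i)) = mk _ (C t * X i) :=
    Ideal.Quotient.eq.mpr (Ideal.subset_span ⟨i, rfl⟩)
  rw [← f.commutes, ← f.commutes, ← map_mul]
  exact congrArg f hrel.symm

theorem subsingleton_algHom_dilatation {a : σ → R} {t : R}
    (ht : IsLeftRegular (algebraMap R B t)) :
    Subsingleton (MvPolynomial σ R ⧸ dilatationIdeal a t →ₐ[R] B) :=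
  ⟨fun f g => Ideal.Quotient.algHom_ext _ <| algHom_ext fun i =>
    ht <| (algebraMap_mul_algHom_mk_X f i).trans (algebraMap_mul_algHom_mk_X g i).symm⟩

end MvPolynomial

theorem existsUnique_algHom_dilatation_general
    (A : Type*) [CommRing A] (p n : ℕ) (a : Fin n → A)
    (B : Type*) [CommRing B] [Algebra A B]
    (hreg : ∀ b : B, (p : B) * b = 0 → b = 0)
    (hmem : ∀ i, algebraMap A B (a i) ∈ Ideal.span {(p : B)}) :
    ∃! _f : (MvPolynomial (Fin n) A ⧸ Ideal.span (Set.range fun i =>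
        MvPolynomial.C (a i) - (p : MvPolynomial (Fin n) A) * MvPolynomial.X i)) →ₐ[A] B,
      True := by
  rw [← map_natCast (MvPolynomial.C : A →+* MvPolynomial (Fin n) A) p]
  have hpB : algebraMap A B p = p := map_natCast _ p
  have := MvPolynomial.subsingleton_algHom_dilatation (σ := Fin n) (a := a)
    (hpB ▸ isLeftRegular_iff_right_eq_zero_of_mul.mpr hreg)
  obtain ⟨f⟩ := MvPolynomial.nonempty_algHom_dilatation (σ := Fin n) (hpB ▸ hmem)
  exact ⟨f, trivial, fun g _ => Subsingleton.elim g f⟩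

/-- Let `A` be a commutative ring, `a_1, …, a_n ∈ A`, `p` a prime, and
`C = A[x_1, …, x_n]/(a_i − p·x_i)`.  Let `B` be a commutative `A`-algebra in which `p` is a
nonzerodivisor and such that the image of each `a_i` in `B` lies in `p·B`.  Then there is a
unique `A`-algebra homomorphism `C → B`. -/
theorem existsUnique_algHom_dilatation
    (A : Type*) [CommRing A] (p n : ℕ) (hp : p.Prime) (a : Fin n → A)
    (B : Type*) [CommRing B] [Algebra A B]
    (hreg : ∀ b : B, (p : B) * b = 0 → b = 0)
    (hmem : ∀ i, algebraMap A B (a i) ∈ Ideal.span {(p : B)}) :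
    ∃! _f : (MvPolynomial (Fin n) A ⧸ Ideal.span (Set.range fun i =>
        MvPolynomial.C (a i) - (p : MvPolynomial (Fin n) A) * MvPolynomial.X i)) →ₐ[A] B,
      True :=
  existsUnique_algHom_dilatation_general A p n a B hreg hmem
end

section
/- Let R be a commutative ring, B a Hopf R-algebra with comultiplication δ: B → B ⊗_R B, counit π: B → R and antipode σ: B → B, and let M be an R-module. Suppose ε: B ⊗_R M → M ⊗_R B is a B-linear map (where B acts on the source through the left tensor factor and on the target through the right tensor factor) such that: (i) applying the counit yields the identity of M, i.e., (id_M ⊗ π) ∘ ε ∘ (inclusion via π) = id in the sense that π^*(ε) = id_M; and (ii) the cocycle condition δ^*(ε) = (ε ⊗ id_B) ∘ (id_B ⊗ ε) holds after the natural identifications. Then ε is an isomorphism, with inverse σ^*(ε). -/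
/-!
Put `ρ m = ε (1 ⊗ m) = ∑ mᵢ ⊗ bᵢ`. By `B`-linearity and commutativity of `B`,
`ε (b ⊗ m) = ∑ mᵢ ⊗ bᵢ b`, so up to the swap `B ⊗ M ≃ M ⊗ B` the map `ε` is the case `f = id` of
the endomorphisms `m ⊗ c ↦ ∑ mᵢ ⊗ f(bᵢ) c` of `M ⊗ B`, one for each `f : B → B`. The counit and cocycle conditions say precisely that
`f ↦ (m ⊗ c ↦ ∑ mᵢ ⊗ f(bᵢ) c)` is a monoid homomorphism from the convolution algebra of `B` to
`End (M ⊗ B)`. In the convolution algebra `id` is invertible with inverse the antipode `σ`, hence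
`ε` is invertible, its inverse being the endomorphism attached to `σ`.
-/

open TensorProduct WithConv LinearMap

section Coaction

variable {R B M : Type*} [CommSemiring R] [Semiring B] [Bialgebra R B]
  [AddCommMonoid M] [Module R M]

structure IsRightCoaction (ρ : M →ₗ[R] M ⊗[R] B) : Prop where
  counit : ∀ m : M,
    TensorProduct.rid R M (lTensor M (Coalgebra.counit (R := R) (A := B)) (ρ m)) = m
  coassoc : ∀ m : M,
    TensorProduct.assoc R M B B (rTensor B ρ (ρ m)) =
      lTensor M (Coalgebra.comul (R := R) (A := B)) (ρ m)

theorem lTensor_assoc_tmul (h : B ⊗[R] B →ₗ[R] B) (y : M ⊗[R] B) (c : B) :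
    lTensor M h (TensorProduct.assoc R M B B (y ⊗ₜ c)) =
      lTensor M (h ∘ₗ (mk R B B).flip c) y := by
  induction y using TensorProduct.induction_on with
  | zero => simp
  | tmul m b => simp
  | add y z hy hz => simp only [add_tmul, map_add, hy, hz]

/-- The endomorphism `m ⊗ c ↦ ∑ mᵢ ⊗ f(bᵢ) c` of `M ⊗ B`, where `ρ m = ∑ mᵢ ⊗ bᵢ`. -/
def convAction (ρ : M →ₗ[R] M ⊗[R] B) (f : WithConv (B →ₗ[R] B)) : Module.End R (M ⊗[R] B) :=
  lTensor M (mul' R B ∘ₗ rTensor B f.ofConv) ∘ₗ TensorProduct.assoc R M B B ∘ₗ rTensor B ρ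

theorem convAction_tmul (ρ : M →ₗ[R] M ⊗[R] B) (f : WithConv (B →ₗ[R] B)) (m : M) (c : B) :
    convAction ρ f (m ⊗ₜ c) = lTensor M (mulRight R c ∘ₗ f.ofConv) (ρ m) := by
  simp only [convAction, coe_comp, Function.comp_apply, rTensor_tmul, LinearEquiv.coe_coe,
    lTensor_assoc_tmul]
  rfl

theorem convAction_lTensor (ρ : M →ₗ[R] M ⊗[R] B) (f : WithConv (B →ₗ[R] B))
    (k : B →ₗ[R] B) (y : M ⊗[R] B) :
    convAction ρ f (lTensor M k y) =
      lTensor M (mul' R B ∘ₗ map f.ofConv k) (TensorProduct.assoc R M B B (rTensor B ρ y)) := by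
  induction y using TensorProduct.induction_on with
  | zero => simp
  | tmul m b =>
    rw [lTensor_tmul, convAction_tmul, rTensor_tmul, lTensor_assoc_tmul]
    rfl
  | add y z hy hz => simp only [map_add, hy, hz]

namespace IsRightCoaction

variable {ρ : M →ₗ[R] M ⊗[R] B}

theorem convAction_one (hρ : IsRightCoaction ρ) : convAction ρ 1 = LinearMap.id := by
  refine TensorProduct.ext' fun m c => ?_
  have hcounit : lTensor M (Coalgebra.counit (R := R) (A := B)) (ρ m) =
      (TensorProduct.rid R M).symm m :=
    (LinearEquiv.eq_symm_apply _).2 (hρ.counit m)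
  simp [convAction_tmul, LinearMap.convOne_def, lTensor_comp, hcounit]

theorem convAction_mul (hρ : IsRightCoaction ρ) (f g : WithConv (B →ₗ[R] B)) :
    convAction ρ (f * g) = convAction ρ f ∘ₗ convAction ρ g := by
  refine TensorProduct.ext' fun m c => ?_
  have hmul : mul' R B ∘ₗ map f.ofConv (mulRight R c ∘ₗ g.ofConv) =
      mulRight R c ∘ₗ mul' R B ∘ₗ map f.ofConv g.ofConv := by
    ext x y
    simp [mul_assoc]
  calc convAction ρ (f * g) (m ⊗ₜ c)
      = lTensor M (mulRight R c ∘ₗ (f * g).ofConv) (ρ m) := convAction_tmul ρ _ m c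
    _ = lTensor M (mul' R B ∘ₗ map f.ofConv (mulRight R c ∘ₗ g.ofConv))
          (lTensor M Coalgebra.comul (ρ m)) := by rw [← lTensor_comp_apply, hmul]; rfl
    _ = convAction ρ f (lTensor M (mulRight R c ∘ₗ g.ofConv) (ρ m)) := by
      rw [convAction_lTensor, hρ.coassoc]
    _ = (convAction ρ f ∘ₗ convAction ρ g) (m ⊗ₜ c) := by rw [comp_apply, convAction_tmul]

def convActionHom (hρ : IsRightCoaction ρ) :
    WithConv (B →ₗ[R] B) →* Module.End R (M ⊗[R] B) where
  toFun := convAction ρ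
  map_one' := hρ.convAction_one
  map_mul' := hρ.convAction_mul

theorem bijective_convAction_of_isUnit (hρ : IsRightCoaction ρ) {f : WithConv (B →ₗ[R] B)}
    (hf : IsUnit f) : Function.Bijective (convAction ρ f) :=
  (Module.End.isUnit_iff _).1 (hf.map hρ.convActionHom)

end IsRightCoaction

end Coaction

theorem HopfAlgebra.isUnit_toConv_id {R B : Type*} [CommSemiring R] [Semiring B]
    [HopfAlgebra R B] : IsUnit (toConv (LinearMap.id : B →ₗ[R] B)) :=
  isUnit_iff_exists.2 ⟨_, LinearMap.id_mul_antipode, LinearMap.antipode_mul_id⟩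

/-- Let `R` be a commutative ring, `B` a (commutative) Hopf `R`-algebra, and `M` an
`R`-module.  Suppose `ε : B ⊗ M → M ⊗ B` is a `B`-linear map (for the `B`-action through
the left tensor factor on the source, and through the right tensor factor on the target)
such that applying the counit yields the identity of `M` and the cocycle condition holds.
Then `ε` is an isomorphism. -/
theorem stratification_bijective
    (R B M : Type*) [CommRing R] [CommRing B] [HopfAlgebra R B]
    [AddCommGroup M] [Module R M]
    (ε : B ⊗[R] M →ₗ[R] M ⊗[R] B)
    (hlin : ∀ (b' b : B) (m : M),
      ε ((b' * b) ⊗ₜ[R] m) = LinearMap.lTensor M (LinearMap.mulLeft R b') (ε (b ⊗ₜ[R] m)))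
    (hcounit : ∀ m : M,
      TensorProduct.rid R M
        (LinearMap.lTensor M (Coalgebra.counit (R := R) (A := B)) (ε ((1 : B) ⊗ₜ[R] m))) = m)
    (hcocycle : ∀ m : M,
      TensorProduct.assoc R M B B
          (LinearMap.rTensor B (ε ∘ₗ TensorProduct.mk R B M 1) (ε ((1 : B) ⊗ₜ[R] m)))
        = LinearMap.lTensor M (Coalgebra.comul (R := R) (A := B)) (ε ((1 : B) ⊗ₜ[R] m))) :
    Function.Bijective ε := by
  set ρ : M →ₗ[R] M ⊗[R] B := ε ∘ₗ TensorProduct.mk R B M 1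
  have hρ : IsRightCoaction ρ := ⟨hcounit, hcocycle⟩
  have hε : ε = convAction ρ (toConv LinearMap.id) ∘ₗ (TensorProduct.comm R B M).toLinearMap := by
    refine TensorProduct.ext' fun b m => ?_
    have hmul : mulLeft R b = mulRight R b := LinearMap.ext fun x => mul_comm b x
    have hb := hlin b 1 m
    rw [mul_one] at hb
    rw [hb, hmul, comp_apply, LinearEquiv.coe_coe, comm_tmul, convAction_tmul, ofConv_toConv,
      comp_id]
    rfl
  rw [hε, coe_comp, LinearEquiv.coe_coe]
  exact (hρ.bijective_convAction_of_isUnit HopfAlgebra.isUnit_toConv_id).comp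
    (TensorProduct.comm R B M).bijective
end

section
/- Let R → S be a homomorphism of commutative rings, p ∈ R, and let M be an S-module with an R-linear connection ∇: M → M ⊗_S Ω_{S/R} (satisfying the usual Leibniz rule). Let M = M^0 ⊇ M^1 ⊇ … ⊇ M^ℓ ⊇ M^{ℓ+1} = 0 be a decreasing filtration by S-submodules satisfying Griffiths transversality: ∇(M^i) ⊆ M^{i-1} ⊗_S Ω_{S/R} for 1 ≤ i ≤ ℓ. Define g: ⊕_{i=1}^{ℓ} M^i → ⊕_{i=0}^{ℓ} M^i by sending m ∈ M^i to (m, −p·m) ∈ M^{i-1} ⊕ M^i, and set M̃ = coker(g). Let h: ⊕_{i=0}^{ℓ} M^i → (⊕_{i=0}^{ℓ} M^i) ⊗_S Ω_{S/R} be given by h|_{M^i} = ∇ (landing in M^{i-1} ⊗ Ω) for i ≥ 1 and h|_{M^0} = p·∇. Then h descends to a well-defined R-linear map ∇̃: M̃ → M̃ ⊗_S Ω_{S/R} satisfying the p-Leibniz rule ∇̃(s·x) = s·∇̃(x) + p·(x ⊗ ds) for all s ∈ S and x ∈ M̃; i.e., ∇̃ is a p-connection on M̃. -/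
/-!
Call an additive map `φ : A → B ⊗ Ω` a Leibniz map along an `S`-linear `π : A → B` if
`φ (s • a) = s • φ a + π a ⊗ ds`. Since `M^j ⊗ Ω → M ⊗ Ω` is injective, the lifts of `∇` to
`M^i → M^{i-1} ⊗ Ω` are Leibniz maps along the inclusions, and hence `h` is one along
`p • (⊕ M^k → M̃)`. As this map vanishes on the relations, so does `h` once it vanishes on the
generators `(m)_i − (p·m)_{i+1}`, `m ∈ M^{i+1}`. It does: by Griffiths transversality
`∇ m ∈ M^i ⊗ Ω`, and placing it in degree `i - 1` gives `p` times placing it in degree `i`.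
The induced map on `M̃` is then a Leibniz map along `p • id`, i.e. a `p`-connection.
-/


open TensorProduct

section

variable {R S : Type*} [CommRing R] [CommRing S] [Algebra R S]
variable {M : Type*} [AddCommGroup M] [Module S M]

/-- The submodule of relations defining the Rees-type module `M̃`: for `m ∈ M^{i+1}`,
the element `(m)_i − (p·m)_{i+1}` of `⊕_{j=0}^{ℓ} M^j`. -/
def reesRel (p : R) (ℓ : ℕ) (F : ℕ → Submodule S M) (hFdec : ∀ i, F (i + 1) ≤ F i) :
    Submodule S (∀ j : Fin (ℓ + 1), ↥(F (j : ℕ))) :=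
  Submodule.span S {y | ∃ (i : ℕ) (hi : i < ℓ) (m : ↥(F (i + 1))),
    y = Pi.single (⟨i, Nat.lt_succ_of_lt hi⟩ : Fin (ℓ + 1))
          (Submodule.inclusion (hFdec i) m)
      - Pi.single (⟨i + 1, Nat.succ_lt_succ hi⟩ : Fin (ℓ + 1)) (algebraMap R S p • m)}

/-- The map `M^j ⊗ Ω → M̃ ⊗ Ω` induced by placing `M^j` in degree `j` of `M̃`. -/
noncomputable def reesEmb (p : R) (ℓ : ℕ) (F : ℕ → Submodule S M)
    (hFdec : ∀ i, F (i + 1) ≤ F i) (j : ℕ) (hj : j < ℓ + 1) :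
    ↥(F j) ⊗[S] KaehlerDifferential R S →ₗ[S]
      ((∀ k : Fin (ℓ + 1), ↥(F (k : ℕ))) ⧸ reesRel p ℓ F hFdec) ⊗[S]
        KaehlerDifferential R S :=
  LinearMap.rTensor (KaehlerDifferential R S)
    ((reesRel p ℓ F hFdec).mkQ ∘ₗ
      LinearMap.single S (fun k : Fin (ℓ + 1) => ↥(F (k : ℕ))) ⟨j, hj⟩)

section Leibniz

variable {A B C : Type*} [AddCommGroup A] [Module S A] [AddCommGroup B] [Module S B]
  [AddCommGroup C] [Module S C]

/-- A connection is a Leibniz map along `LinearMap.id`, a `p`-connection one along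
`p • LinearMap.id`. -/
def IsLeibnizAlong (π : A →ₗ[S] B) (φ : A →+ B ⊗[S] Ω[S⁄R]) : Prop :=
  ∀ (s : S) (a : A), φ (s • a) = s • φ a + π a ⊗ₜ KaehlerDifferential.D R S s

namespace IsLeibnizAlong

variable {π : A →ₗ[S] B} {φ : A →+ B ⊗[S] Ω[S⁄R]}

theorem map_algebraMap_smul (h : IsLeibnizAlong π φ) (r : R) (a : A) :
    φ (algebraMap R S r • a) = algebraMap R S r • φ a := by
  rw [h, Derivation.map_algebraMap, tmul_zero, add_zero]

theorem smul (h : IsLeibnizAlong π φ) (c : S) : IsLeibnizAlong (c • π) (c • φ) := by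
  intro s a
  rw [AddMonoidHom.smul_apply, AddMonoidHom.smul_apply, h, smul_add, smul_comm c s,
    LinearMap.smul_apply, smul_tmul']

theorem comp (h : IsLeibnizAlong π φ) {A' : Type*} [AddCommGroup A'] [Module S A']
    (f : A' →ₗ[S] A) : IsLeibnizAlong (π ∘ₗ f) (φ.comp f.toAddMonoidHom) := by
  intro s a
  simp only [AddMonoidHom.comp_apply, LinearMap.toAddMonoidHom_coe, map_smul, h s (f a),
    LinearMap.comp_apply]

theorem rTensor_comp (h : IsLeibnizAlong π φ) (g : B →ₗ[S] C) :
    IsLeibnizAlong (g ∘ₗ π) ((g.rTensor Ω[S⁄R]).toAddMonoidHom.comp φ) := by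
  intro s a
  simp only [AddMonoidHom.comp_apply, LinearMap.toAddMonoidHom_coe, h s a, map_add, map_smul,
    LinearMap.rTensor_tmul, LinearMap.comp_apply]

theorem of_rTensor_comp {g : B →ₗ[S] C} (hg : Function.Injective (g.rTensor Ω[S⁄R]))
    (h : IsLeibnizAlong (g ∘ₗ π) ((g.rTensor Ω[S⁄R]).toAddMonoidHom.comp φ)) :
    IsLeibnizAlong π φ := by
  intro s a
  apply hg
  simpa only [AddMonoidHom.comp_apply, LinearMap.toAddMonoidHom_coe, map_add, map_smul,
    LinearMap.rTensor_tmul, LinearMap.comp_apply] using h s a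

theorem sum {ι : Type*} (t : Finset ι) {π : ι → A →ₗ[S] B} {φ : ι → A →+ B ⊗[S] Ω[S⁄R]}
    (h : ∀ i ∈ t, IsLeibnizAlong (π i) (φ i)) : IsLeibnizAlong (∑ i ∈ t, π i) (∑ i ∈ t, φ i) := by
  intro s a
  simp only [AddMonoidHom.finsetSum_apply, LinearMap.sum_apply, sum_tmul,
    Finset.smul_sum, ← Finset.sum_add_distrib]
  exact Finset.sum_congr rfl fun i hi => h i hi s a

theorem map_eq_zero_of_mem_span (h : IsLeibnizAlong π φ) {G : Set A} (hG : ∀ a ∈ G, φ a = 0)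
    (hπ : Submodule.span S G ≤ LinearMap.ker π) {a : A} (ha : a ∈ Submodule.span S G) :
    φ a = 0 := by
  induction ha using Submodule.span_induction with
  | mem a ha => exact hG a ha
  | zero => exact map_zero φ
  | add a b _ _ ha hb => rw [map_add, ha, hb, add_zero]
  | smul s a ha ih => rw [h, ih, hπ ha, smul_zero, zero_tmul, add_zero]

theorem quotientLift {K : Submodule S A} {π : A ⧸ K →ₗ[S] B}
    (h : IsLeibnizAlong (π ∘ₗ K.mkQ) φ) (hK : ∀ a ∈ K.toAddSubgroup, φ a = 0) :
    IsLeibnizAlong π (QuotientAddGroup.lift K.toAddSubgroup φ hK) := by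
  intro s a
  obtain ⟨a, rfl⟩ := K.mkQ_surjective a
  rw [← map_smul]
  exact h s a

end IsLeibnizAlong

end Leibniz

section Lift

variable {A P N : Type*} [AddZeroClass A] [AddCommMonoid P] [Module S P]
  [AddCommMonoid N] [Module S N] {ι : P →ₗ[S] N} (hι : Function.Injective ι)

noncomputable def AddMonoidHom.liftOfInjective (f : A →+ N) (hf : ∀ a, f a ∈ LinearMap.range ι) :
    A →+ P :=
  (LinearEquiv.ofInjective ι hι).symm.toLinearMap.toAddMonoidHom.comp (f.codRestrict _ hf)

theorem AddMonoidHom.apply_liftOfInjective {f : A →+ N} (hf : ∀ a, f a ∈ LinearMap.range ι)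
    (a : A) : ι (f.liftOfInjective hι hf a) = f a :=
  LinearEquiv.ofInjective_symm_apply ι (h := hι) ⟨f a, hf a⟩

theorem AddMonoidHom.liftOfInjective_eq_iff {f : A →+ N} (hf : ∀ a, f a ∈ LinearMap.range ι)
    {a : A} {y : P} : f.liftOfInjective hι hf a = y ↔ ι y = f a := by
  rw [← hι.eq_iff, AddMonoidHom.apply_liftOfInjective, eq_comm]

end Lift

section Restrict

variable (D : M →+ M ⊗[S] Ω[S⁄R]) {P : Submodule S M}
  (hP : Function.Injective (P.subtype.rTensor Ω[S⁄R])) (Q : Submodule S M)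
  (hQ : ∀ x ∈ Q, D x ∈ LinearMap.range (P.subtype.rTensor Ω[S⁄R]))

noncomputable def restrictConn : Q →+ P ⊗[S] Ω[S⁄R] :=
  (D.comp Q.subtype.toAddMonoidHom).liftOfInjective hP fun x => hQ x x.2

theorem restrictConn_eq_iff {x : Q} {y : P ⊗[S] Ω[S⁄R]} :
    restrictConn D hP Q hQ x = y ↔ P.subtype.rTensor Ω[S⁄R] y = D x :=
  AddMonoidHom.liftOfInjective_eq_iff hP _

theorem isLeibnizAlong_restrictConn (hD : IsLeibnizAlong LinearMap.id D) (hQP : Q ≤ P) :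
    IsLeibnizAlong (Submodule.inclusion hQP) (restrictConn D hP Q hQ) := by
  refine IsLeibnizAlong.of_rTensor_comp hP ?_
  have hcomp : (P.subtype.rTensor Ω[S⁄R]).toAddMonoidHom.comp (restrictConn D hP Q hQ)
      = D.comp Q.subtype.toAddMonoidHom :=
    AddMonoidHom.ext fun x => AddMonoidHom.apply_liftOfInjective hP _ x
  rw [hcomp, Submodule.subtype_comp_inclusion]
  exact hD.comp Q.subtype

theorem restrictConn_inclusion {Q' : Submodule S M}
    (hQ' : ∀ x ∈ Q', D x ∈ LinearMap.range (P.subtype.rTensor Ω[S⁄R])) (hQ'Q : Q' ≤ Q) (x : Q') :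
    restrictConn D hP Q hQ (Submodule.inclusion hQ'Q x) = restrictConn D hP Q' hQ' x := by
  rw [restrictConn_eq_iff, (restrictConn_eq_iff D hP Q' hQ').1 rfl]
  rfl

theorem restrictConn_inclusion_eq_rTensor {P' Q' : Submodule S M}
    (hP' : Function.Injective (P'.subtype.rTensor Ω[S⁄R]))
    (hQ' : ∀ x ∈ Q', D x ∈ LinearMap.range (P'.subtype.rTensor Ω[S⁄R])) (hP'P : P' ≤ P)
    (hQ'Q : Q' ≤ Q) (x : Q') :
    restrictConn D hP Q hQ (Submodule.inclusion hQ'Q x)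
      = (Submodule.inclusion hP'P).rTensor Ω[S⁄R] (restrictConn D hP' Q' hQ' x) := by
  rw [restrictConn_eq_iff, ← LinearMap.rTensor_comp_apply, Submodule.subtype_comp_inclusion,
    (restrictConn_eq_iff D hP' Q' hQ').1 rfl]
  rfl

end Restrict

section ReesModule

variable (p : R) {ℓ : ℕ} (F : ℕ → Submodule S M) (hFdec : ∀ i, F (i + 1) ≤ F i)

theorem reesRel_mkQ_comp_single_comp_inclusion {j : ℕ} (hj : j < ℓ) :
    (reesRel p ℓ F hFdec).mkQ ∘ₗ LinearMap.single S (fun k : Fin (ℓ + 1) => F k) ⟨j, by omega⟩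
        ∘ₗ Submodule.inclusion (hFdec j)
      = algebraMap R S p •
          ((reesRel p ℓ F hFdec).mkQ ∘ₗ LinearMap.single S _ ⟨j + 1, by omega⟩) := by
  ext m
  rw [LinearMap.smul_apply, ← map_smul, LinearMap.comp_apply, LinearMap.comp_apply,
    LinearMap.comp_apply, LinearMap.single_apply, LinearMap.single_apply,
    Submodule.mkQ_apply, Submodule.mkQ_apply, Submodule.Quotient.eq]
  exact Submodule.subset_span ⟨j, hj, m, rfl⟩

theorem reesEmb_comp_rTensor_inclusion {j : ℕ} (hj : j < ℓ) :
    reesEmb p ℓ F hFdec j (by omega) ∘ₗ (Submodule.inclusion (hFdec j)).rTensor Ω[S⁄R]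
      = algebraMap R S p • reesEmb p ℓ F hFdec (j + 1) (by omega) := by
  rw [reesEmb, reesEmb, ← LinearMap.rTensor_comp, ← LinearMap.rTensor_smul, LinearMap.comp_assoc,
    reesRel_mkQ_comp_single_comp_inclusion p F hFdec hj]

variable (D : M →+ M ⊗[S] Ω[S⁄R])
  (hinj : ∀ j, Function.Injective ((F j).subtype.rTensor Ω[S⁄R]))
  (hD0 : ∀ x ∈ F 0, D x ∈ LinearMap.range ((F 0).subtype.rTensor Ω[S⁄R]))
  (hDsucc : ∀ j < ℓ, ∀ x ∈ F (j + 1), D x ∈ LinearMap.range ((F j).subtype.rTensor Ω[S⁄R]))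

/-- The paper's `h` on `M^k`, followed by `(⊕ M^k) ⊗ Ω → M̃ ⊗ Ω`. -/
noncomputable def reesLevelConn : ∀ k, k < ℓ + 1 →
    F k →+ ((∀ k : Fin (ℓ + 1), F k) ⧸ reesRel p ℓ F hFdec) ⊗[S] Ω[S⁄R]
  | 0, hk => algebraMap R S p •
      (reesEmb p ℓ F hFdec 0 hk).toAddMonoidHom.comp (restrictConn D (hinj 0) (F 0) hD0)
  | j + 1, hk => (reesEmb p ℓ F hFdec j (by omega)).toAddMonoidHom.comp
      (restrictConn D (hinj j) (F (j + 1)) (hDsucc j (by omega)))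

theorem isLeibnizAlong_reesLevelConn (hD : IsLeibnizAlong LinearMap.id D) :
    ∀ k (hk : k < ℓ + 1), IsLeibnizAlong
      (algebraMap R S p • ((reesRel p ℓ F hFdec).mkQ ∘ₗ
        LinearMap.single S (fun k : Fin (ℓ + 1) => F k) ⟨k, hk⟩))
      (reesLevelConn p F hFdec D hinj hD0 hDsucc k hk)
  | 0, _ => ((isLeibnizAlong_restrictConn D (hinj 0) (F 0) hD0 hD le_rfl).rTensor_comp _).smul _
  | j + 1, hk => by
    have := (isLeibnizAlong_restrictConn D (hinj j) (F (j + 1)) (hDsucc j (by omega)) hD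
      (hFdec j)).rTensor_comp
        ((reesRel p ℓ F hFdec).mkQ ∘ₗ LinearMap.single S (fun k : Fin (ℓ + 1) => F k) ⟨j, by omega⟩)
    rwa [LinearMap.comp_assoc, reesRel_mkQ_comp_single_comp_inclusion p F hFdec (by omega)] at this

theorem reesLevelConn_inclusion {j : ℕ} (hj : j < ℓ) (m : F (j + 1)) :
    reesLevelConn p F hFdec D hinj hD0 hDsucc j (by omega) (Submodule.inclusion (hFdec j) m)
      = algebraMap R S p • reesLevelConn p F hFdec D hinj hD0 hDsucc (j + 1) (by omega) m := by
  cases j with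
  | zero =>
    simp only [reesLevelConn, AddMonoidHom.smul_apply, AddMonoidHom.comp_apply,
      LinearMap.toAddMonoidHom_coe]
    rw [restrictConn_inclusion]
  | succ i =>
    simp only [reesLevelConn, AddMonoidHom.comp_apply, LinearMap.toAddMonoidHom_coe]
    rw [restrictConn_inclusion_eq_rTensor D (hinj i) _ _ (hinj (i + 1)) _ (hFdec i),
      ← LinearMap.comp_apply, reesEmb_comp_rTensor_inclusion p F hFdec (by omega)]
    rfl

/-- The paper's `h`, followed by `(⊕ M^k) ⊗ Ω → M̃ ⊗ Ω`. -/
noncomputable def reesSumConn :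
    (∀ k : Fin (ℓ + 1), F k) →+ ((∀ k : Fin (ℓ + 1), F k) ⧸ reesRel p ℓ F hFdec) ⊗[S] Ω[S⁄R] :=
  ∑ k : Fin (ℓ + 1), (reesLevelConn p F hFdec D hinj hD0 hDsucc k k.2).comp
    (LinearMap.proj (R := S) (φ := fun k : Fin (ℓ + 1) => F k) k).toAddMonoidHom

theorem reesSumConn_single (k : Fin (ℓ + 1)) (x : F k) :
    reesSumConn p F hFdec D hinj hD0 hDsucc (Pi.single k x)
      = reesLevelConn p F hFdec D hinj hD0 hDsucc k k.2 x := by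
  rw [reesSumConn, AddMonoidHom.finsetSum_apply, Finset.sum_eq_single k]
  · simp
  · intro j _ hjk
    simp [Pi.single_eq_of_ne hjk]
  · simp

theorem isLeibnizAlong_reesSumConn (hD : IsLeibnizAlong LinearMap.id D) :
    IsLeibnizAlong (algebraMap R S p • (reesRel p ℓ F hFdec).mkQ)
      (reesSumConn p F hFdec D hinj hD0 hDsucc) := by
  have hπ : ∑ k : Fin (ℓ + 1), (algebraMap R S p • ((reesRel p ℓ F hFdec).mkQ ∘ₗ
        LinearMap.single S (fun k : Fin (ℓ + 1) => F k) k)) ∘ₗ LinearMap.proj k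
      = algebraMap R S p • (reesRel p ℓ F hFdec).mkQ := by
    refine LinearMap.ext fun v => ?_
    simp only [LinearMap.sum_apply, LinearMap.comp_apply, LinearMap.smul_apply,
      LinearMap.proj_apply, LinearMap.single_apply, ← Finset.smul_sum, ← map_sum,
      Finset.univ_sum_single]
  rw [← hπ]
  exact IsLeibnizAlong.sum _ fun k _ =>
    (isLeibnizAlong_reesLevelConn p F hFdec D hinj hD0 hDsucc hD k k.2).comp _

theorem reesSumConn_eq_zero_of_mem (hD : IsLeibnizAlong LinearMap.id D) {v : ∀ k : Fin (ℓ + 1), F k}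
    (hv : v ∈ reesRel p ℓ F hFdec) : reesSumConn p F hFdec D hinj hD0 hDsucc v = 0 := by
  have hleib := isLeibnizAlong_reesSumConn p F hFdec D hinj hD0 hDsucc hD
  refine hleib.map_eq_zero_of_mem_span ?_ ?_ hv
  · rintro _ ⟨i, hi, m, rfl⟩
    rw [map_sub, reesSumConn_single, reesSumConn_single,
      (isLeibnizAlong_reesLevelConn p F hFdec D hinj hD0 hDsucc hD _ _).map_algebraMap_smul]
    exact sub_eq_zero.2 (reesLevelConn_inclusion p F hFdec D hinj hD0 hDsucc hi m)
  · intro v hv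
    rw [LinearMap.mem_ker, LinearMap.smul_apply, Submodule.mkQ_apply,
      (Submodule.Quotient.mk_eq_zero (reesRel p ℓ F hFdec)).2 hv, smul_zero]

noncomputable def reesConn (hD : IsLeibnizAlong LinearMap.id D) :
    ((∀ k : Fin (ℓ + 1), F k) ⧸ reesRel p ℓ F hFdec) →+
      ((∀ k : Fin (ℓ + 1), F k) ⧸ reesRel p ℓ F hFdec) ⊗[S] Ω[S⁄R] :=
  QuotientAddGroup.lift _ (reesSumConn p F hFdec D hinj hD0 hDsucc)
    fun _ hv => reesSumConn_eq_zero_of_mem p F hFdec D hinj hD0 hDsucc hD hv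

theorem reesConn_mkQ (hD : IsLeibnizAlong LinearMap.id D) (v : ∀ k : Fin (ℓ + 1), F k) :
    reesConn p F hFdec D hinj hD0 hDsucc hD ((reesRel p ℓ F hFdec).mkQ v)
      = reesSumConn p F hFdec D hinj hD0 hDsucc v :=
  rfl

theorem isLeibnizAlong_reesConn (hD : IsLeibnizAlong LinearMap.id D) :
    IsLeibnizAlong (algebraMap R S p • LinearMap.id) (reesConn p F hFdec D hinj hD0 hDsucc hD) := by
  have h := isLeibnizAlong_reesSumConn p F hFdec D hinj hD0 hDsucc hD
  rw [← LinearMap.id_comp (reesRel p ℓ F hFdec).mkQ, ← LinearMap.smul_comp] at h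
  exact h.quotientLift _

end ReesModule

theorem exists_p_connection_on_rees_module_general
    (R S : Type*) [CommRing R] [CommRing S] [Algebra R S] (p : R)
    (M : Type*) [AddCommGroup M] [Module S M]
    (D : M → M ⊗[S] KaehlerDifferential R S)
    (hDadd : ∀ x y : M, D (x + y) = D x + D y)
    (hDleib : ∀ (s : S) (x : M), D (s • x) = s • D x + x ⊗ₜ[S] KaehlerDifferential.D R S s)
    (ℓ : ℕ) (F : ℕ → Submodule S M)
    (hF0 : F 0 = ⊤) (hFdec : ∀ i, F (i + 1) ≤ F i)
    -- `M^j ⊗ Ω` is regarded as a subset of `M ⊗ Ω`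
    (hinj : ∀ j : ℕ, Function.Injective
      (TensorProduct.map (F j).subtype
        (LinearMap.id : KaehlerDifferential R S →ₗ[S] KaehlerDifferential R S)))
    -- Griffiths transversality: `∇(M^i) ⊆ M^{i-1} ⊗ Ω` for `1 ≤ i ≤ ℓ`
    (hGriffiths : ∀ i : ℕ, 1 ≤ i → i ≤ ℓ → ∀ x ∈ F i, D x ∈ LinearMap.range
      (TensorProduct.map (F (i - 1)).subtype
        (LinearMap.id : KaehlerDifferential R S →ₗ[S] KaehlerDifferential R S))) :
    ∃ Dt : ((∀ k : Fin (ℓ + 1), ↥(F (k : ℕ))) ⧸ reesRel p ℓ F hFdec) →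
        ((∀ k : Fin (ℓ + 1), ↥(F (k : ℕ))) ⧸ reesRel p ℓ F hFdec) ⊗[S]
          KaehlerDifferential R S,
      -- additivity
      (∀ a b, Dt (a + b) = Dt a + Dt b) ∧
      -- `R`-linearity
      (∀ (r : R) a, Dt (algebraMap R S r • a) = algebraMap R S r • Dt a) ∧
      -- the `p`-Leibniz rule: `∇̃` is a `p`-connection
      (∀ (s : S) a, Dt (s • a) = s • Dt a
        + algebraMap R S p • (a ⊗ₜ[S] KaehlerDifferential.D R S s)) ∧
      -- on the class of `x ∈ M^i` (for `1 ≤ i ≤ ℓ`), `∇̃` is induced by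
      -- `∇ : M^i → M^{i-1} ⊗ Ω`, placed in level `i - 1`
      (∀ (i : ℕ) (hi : i < ℓ + 1), 1 ≤ i → ∀ (x : ↥(F i))
        (y : ↥(F (i - 1)) ⊗[S] KaehlerDifferential R S),
        TensorProduct.map (F (i - 1)).subtype LinearMap.id y = D (x : M) →
        Dt ((reesRel p ℓ F hFdec).mkQ (Pi.single (⟨i, hi⟩ : Fin (ℓ + 1)) x))
          = reesEmb p ℓ F hFdec (i - 1) (lt_of_le_of_lt (Nat.sub_le i 1) hi) y) ∧
      -- on the class of `x ∈ M^0`, `∇̃` is induced by `p·∇ : M^0 → M^0 ⊗ Ω`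
      (∀ (x : ↥(F 0)) (y : ↥(F 0) ⊗[S] KaehlerDifferential R S),
        TensorProduct.map (F 0).subtype LinearMap.id y = D (x : M) →
        Dt ((reesRel p ℓ F hFdec).mkQ
            (Pi.single (⟨0, Nat.succ_pos ℓ⟩ : Fin (ℓ + 1)) x))
          = algebraMap R S p • reesEmb p ℓ F hFdec 0 (Nat.succ_pos ℓ) y) := by
  obtain ⟨D, rfl⟩ : ∃ D' : M →+ M ⊗[S] Ω[S⁄R], ⇑D' = D := ⟨AddMonoidHom.mk' D hDadd, rfl⟩
  have hD : IsLeibnizAlong LinearMap.id D := hDleib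
  have hinj' : ∀ j, Function.Injective ((F j).subtype.rTensor Ω[S⁄R]) := hinj
  have hD0 : ∀ x ∈ F 0, D x ∈ LinearMap.range ((F 0).subtype.rTensor Ω[S⁄R]) := fun x _ =>
    LinearMap.rTensor_surjective _ (fun m => ⟨⟨m, hF0 ▸ Submodule.mem_top⟩, rfl⟩) (D x)
  have hDsucc : ∀ j < ℓ, ∀ x ∈ F (j + 1), D x ∈ LinearMap.range ((F j).subtype.rTensor Ω[S⁄R]) :=
    fun j hj => hGriffiths (j + 1) (by omega) hj
  have hleib := isLeibnizAlong_reesConn p F hFdec _ hinj' hD0 hDsucc hD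
  refine ⟨reesConn p F hFdec _ hinj' hD0 hDsucc hD, map_add _, hleib.map_algebraMap_smul,
    fun s a => by rw [hleib, LinearMap.smul_apply, LinearMap.id_apply, smul_tmul'], ?_, ?_⟩
  · rintro (_ | j) hj hj1 x y hy
    · omega
    · rw [reesConn_mkQ, reesSumConn_single]
      exact congrArg (reesEmb p ℓ F hFdec j _) ((restrictConn_eq_iff _ _ _ _).2 hy)
  · intro x y hy
    rw [reesConn_mkQ, reesSumConn_single]
    exact congrArg (algebraMap R S p • reesEmb p ℓ F hFdec 0 _ ·)
      ((restrictConn_eq_iff _ _ _ _).2 hy)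

/-- Let `R → S` be a homomorphism of commutative rings, `p ∈ R`, and `M` an `S`-module
with an `R`-linear connection `∇ : M → M ⊗_S Ω_{S/R}` and a decreasing filtration
`M = M^0 ⊇ ⋯ ⊇ M^{ℓ+1} = 0` satisfying Griffiths transversality.  Let
`M̃ = coker(⊕_{i=1}^ℓ M^i → ⊕_{i=0}^ℓ M^i)`, `m ↦ (m, −p·m)`, and let `h` be given by `∇`
(shifting the level down by one) on `M^i` for `i ≥ 1` and by `p·∇` on `M^0`.  Then `h`
descends to a well-defined `R`-linear map `∇̃ : M̃ → M̃ ⊗_S Ω_{S/R}` satisfying the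
`p`-Leibniz rule; i.e. `∇̃` is a `p`-connection on `M̃`. -/
theorem exists_p_connection_on_rees_module
    (R S : Type*) [CommRing R] [CommRing S] [Algebra R S] (p : R)
    (M : Type*) [AddCommGroup M] [Module S M]
    (D : M → M ⊗[S] KaehlerDifferential R S)
    (hDadd : ∀ x y : M, D (x + y) = D x + D y)
    (hDlin : ∀ (r : R) (x : M), D (algebraMap R S r • x) = algebraMap R S r • D x)
    (hDleib : ∀ (s : S) (x : M), D (s • x) = s • D x + x ⊗ₜ[S] KaehlerDifferential.D R S s)
    (ℓ : ℕ) (F : ℕ → Submodule S M)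
    (hF0 : F 0 = ⊤) (hFdec : ∀ i, F (i + 1) ≤ F i) (hFlast : F (ℓ + 1) = ⊥)
    -- `M^j ⊗ Ω` is regarded as a subset of `M ⊗ Ω`
    (hinj : ∀ j : ℕ, Function.Injective
      (TensorProduct.map (F j).subtype
        (LinearMap.id : KaehlerDifferential R S →ₗ[S] KaehlerDifferential R S)))
    -- Griffiths transversality: `∇(M^i) ⊆ M^{i-1} ⊗ Ω` for `1 ≤ i ≤ ℓ`
    (hGriffiths : ∀ i : ℕ, 1 ≤ i → i ≤ ℓ → ∀ x ∈ F i, D x ∈ LinearMap.range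
      (TensorProduct.map (F (i - 1)).subtype
        (LinearMap.id : KaehlerDifferential R S →ₗ[S] KaehlerDifferential R S))) :
    ∃ Dt : ((∀ k : Fin (ℓ + 1), ↥(F (k : ℕ))) ⧸ reesRel p ℓ F hFdec) →
        ((∀ k : Fin (ℓ + 1), ↥(F (k : ℕ))) ⧸ reesRel p ℓ F hFdec) ⊗[S]
          KaehlerDifferential R S,
      -- additivity
      (∀ a b, Dt (a + b) = Dt a + Dt b) ∧
      -- `R`-linearity
      (∀ (r : R) a, Dt (algebraMap R S r • a) = algebraMap R S r • Dt a) ∧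
      -- the `p`-Leibniz rule: `∇̃` is a `p`-connection
      (∀ (s : S) a, Dt (s • a) = s • Dt a
        + algebraMap R S p • (a ⊗ₜ[S] KaehlerDifferential.D R S s)) ∧
      -- on the class of `x ∈ M^i` (for `1 ≤ i ≤ ℓ`), `∇̃` is induced by
      -- `∇ : M^i → M^{i-1} ⊗ Ω`, placed in level `i - 1`
      (∀ (i : ℕ) (hi : i < ℓ + 1), 1 ≤ i → ∀ (x : ↥(F i))
        (y : ↥(F (i - 1)) ⊗[S] KaehlerDifferential R S),
        TensorProduct.map (F (i - 1)).subtype LinearMap.id y = D (x : M) →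
        Dt ((reesRel p ℓ F hFdec).mkQ (Pi.single (⟨i, hi⟩ : Fin (ℓ + 1)) x))
          = reesEmb p ℓ F hFdec (i - 1) (lt_of_le_of_lt (Nat.sub_le i 1) hi) y) ∧
      -- on the class of `x ∈ M^0`, `∇̃` is induced by `p·∇ : M^0 → M^0 ⊗ Ω`
      (∀ (x : ↥(F 0)) (y : ↥(F 0) ⊗[S] KaehlerDifferential R S),
        TensorProduct.map (F 0).subtype LinearMap.id y = D (x : M) →
        Dt ((reesRel p ℓ F hFdec).mkQ
            (Pi.single (⟨0, Nat.succ_pos ℓ⟩ : Fin (ℓ + 1)) x))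
          = algebraMap R S p • reesEmb p ℓ F hFdec 0 (Nat.succ_pos ℓ) y) :=
  exists_p_connection_on_rees_module_general R S p M D hDadd hDleib ℓ F hF0 hFdec hinj hGriffiths

end
end
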